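/- In the path P_n, let S be a subset of the vertices whose complement S̄ = {v_{i_1}, …, v_{i_k}} (k ≥ 1) is isolated, and set m = i_1 − 1. Then S is a minimal perfect critical vertex set of P_n if and only if all three of the following hold: (i) n − i_k = i_1 − 1 and i_2 − i_1 = i_3 − i_2 = ⋯ = i_k − i_{k−1} (the first and last segments have equal size and all interior segments have equal size); (ii) k = 1, or i_2 − i_1 − 1 = 2m (every interior segment has size 2m); (iii) 2m + 1 is an odd prime. -/

import Mathlib

def pathLap (n : ℕ) : Matrix (Fin n) (Fin n) ℝ :=
  Matrix.of fun i j =>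
    if i = j then ((if (i : ℕ) = 0 then 0 else 1) + (if (i : ℕ) + 1 = n then 0 else 1))
    else if (i : ℕ) + 1 = (j : ℕ) ∨ (j : ℕ) + 1 = (i : ℕ) then -1 else 0

noncomputable def deg (n i : ℕ) : ℝ :=
  (if i = 0 then 0 else 1) + (if i + 1 = n then 0 else 1)

lemma sum_ite_nat (n t : ℕ) (f : Fin n → ℝ) :
    (∑ j : Fin n, if (j : ℕ) = t then f j else 0) = if h : t < n then f ⟨t, h⟩ else 0 := by
  by_cases h : t < n
  · rw [dif_pos h]
    calc (∑ j : Fin n, if (j : ℕ) = t then f j else 0)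
        = ∑ j : Fin n, if j = ⟨t, h⟩ then f j else 0 := by
          refine Finset.sum_congr rfl fun j _ => ?_
          exact if_congr ⟨fun hj => Fin.ext hj, fun hj => congrArg Fin.val hj⟩ rfl rfl
      _ = if (⟨t, h⟩ : Fin n) ∈ Finset.univ then f ⟨t, h⟩ else 0 :=
          Finset.sum_ite_eq' Finset.univ (⟨t, h⟩ : Fin n) f
      _ = f ⟨t, h⟩ := by simp
  · rw [dif_neg h]
    refine Finset.sum_eq_zero fun j _ => ?_
    rw [if_neg]
    have := j.isLt; omega

lemma pathLap_row (n : ℕ) (y : Fin n → ℝ) (i : Fin n) :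
    (pathLap n).mulVec y i =
      deg n i * y i
      - (if h : (i : ℕ) + 1 < n then y ⟨(i : ℕ) + 1, h⟩ else 0)
      - (if h : 0 < (i : ℕ) then y ⟨(i : ℕ) - 1, by omega⟩ else 0) := by
  have hsplit : ∀ j : Fin n, pathLap n i j * y j =
      (if (j : ℕ) = (i : ℕ) then deg n i * y j else 0)
      + (if (j : ℕ) = (i : ℕ) + 1 then -y j else 0)
      + (if (j : ℕ) = (i : ℕ) - 1 then (if (i : ℕ) = 0 then 0 else -1) * y j else 0) := by
    intro j
    have hfe : (i = j) = ((i : ℕ) = (j : ℕ)) := by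
      apply propext; exact Fin.ext_iff
    simp only [pathLap, Matrix.of_apply, hfe, deg]
    split_ifs <;> (try (exfalso; omega)) <;> ring
  unfold Matrix.mulVec dotProduct
  rw [Finset.sum_congr rfl fun j _ => hsplit j]
  rw [Finset.sum_add_distrib, Finset.sum_add_distrib, sum_ite_nat, sum_ite_nat, sum_ite_nat]
  rw [dif_pos i.isLt]
  have h0 : (⟨(i : ℕ), i.isLt⟩ : Fin n) = i := Fin.eta i i.isLt
  rw [h0]
  by_cases h1 : (i : ℕ) + 1 < n
  · rw [dif_pos h1, dif_pos h1]
    by_cases h2 : 0 < (i : ℕ)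
    · rw [dif_pos h2]
      have h3 : (i : ℕ) - 1 < n := by omega
      rw [dif_pos h3, if_neg (by omega)]
      ring
    · have h3 : (i : ℕ) = 0 := by omega
      rw [dif_neg h2]
      by_cases h4 : (i:ℕ) - 1 < n
      · rw [dif_pos h4, if_pos h3]; ring
      · rw [dif_neg h4]; ring
  · rw [dif_neg h1, dif_neg h1]
    by_cases h2 : 0 < (i : ℕ)
    · rw [dif_pos h2]
      have h3 : (i : ℕ) - 1 < n := by have := i.isLt; omega
      rw [dif_pos h3, if_neg (by omega)]
      ring
    · have h3 : (i : ℕ) = 0 := by omega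
      rw [dif_neg h2]
      by_cases h4 : (i:ℕ) - 1 < n
      · rw [dif_pos h4, if_pos h3]; ring
      · rw [dif_neg h4]; ring

noncomputable def pvec (n j : ℕ) : Fin n → ℝ :=
  fun r => Real.cos ((2 * (r : ℕ) + 1) * (j * Real.pi / (2 * n)))

noncomputable def plam (n j : ℕ) : ℝ := 2 - 2 * Real.cos (2 * (j * Real.pi / (2 * n)))

lemma cosid (x b : ℝ) : Real.cos (x + b) + Real.cos (x - b) = 2 * Real.cos b * Real.cos x := by
  rw [Real.cos_add, Real.cos_sub]; ring

lemma pvec_eig (n j : ℕ) (hn : 0 < n) :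
    (pathLap n).mulVec (pvec n j) = plam n j • pvec n j := by
  set a : ℝ := j * Real.pi / (2 * n) with ha
  have hnR : (n : ℝ) ≠ 0 := Nat.cast_ne_zero.mpr (by omega)
  have h2na : 2 * (n : ℝ) * a = j * Real.pi := by
    rw [ha]; field_simp
  have hcos_end : Real.cos ((2 * (n:ℝ) + 1) * a) = Real.cos ((2 * (n:ℝ) - 1) * a) := by
    have e1 : (2 * (n:ℝ) + 1) * a = j * Real.pi + a := by rw [← h2na]; ring
    have e2 : (2 * (n:ℝ) - 1) * a = j * Real.pi - a := by rw [← h2na]; ring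
    rw [e1, e2, Real.cos_add, Real.cos_sub, Real.sin_nat_mul_pi]
    ring
  funext i
  rw [pathLap_row]
  simp only [Pi.smul_apply, smul_eq_mul, pvec, plam, deg, ← ha]
  have id1 := cosid ((2 * ((i:ℕ):ℝ) + 1) * a) (2 * a)
  rw [show (2 * ((i:ℕ):ℝ) + 1) * a + 2 * a = (2 * (((i:ℕ):ℝ) + 1) + 1) * a by ring,
      show (2 * ((i:ℕ):ℝ) + 1) * a - 2 * a = (2 * ((i:ℕ):ℝ) - 1) * a by ring] at id1
  by_cases h1 : (i : ℕ) + 1 = n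
  · rw [if_pos h1, dif_neg (by omega)]
    by_cases h0 : (i : ℕ) = 0
    · -- n = 1
      rw [if_pos h0, dif_neg (by omega)]
      have hn' : n = 1 := by omega
      have hn1 : (n : ℝ) = 1 := by rw [hn']; norm_num
      have haval : a = j * Real.pi / 2 := by rw [ha, hn1]; norm_num
      have h2a : 2 * a = j * Real.pi := by rw [haval]; ring
      rcases Nat.even_or_odd j with ⟨t, ht⟩ | ⟨t, ht⟩
      · have hc : Real.cos (2 * a) = 1 := by
          rw [h2a, ht]
          push_cast
          rw [show ((t:ℝ) + t) * Real.pi = t * (2 * Real.pi) by ring, Real.cos_nat_mul_two_pi]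
        rw [hc]; ring
      · have hc : Real.cos ((2 * ((i:ℕ):ℝ) + 1) * a) = 0 := by
          rw [h0, haval]
          push_cast
          rw [Real.cos_eq_zero_iff]
          exact ⟨t, by push_cast [ht]; ring⟩
        push_cast at hc ⊢
        rw [hc]; ring
    · -- i = n-1 > 0
      rw [if_neg h0, dif_pos (by omega)]
      have h1i : 1 ≤ (i : ℕ) := by omega
      have hcastm : ((((i:ℕ) - 1 : ℕ)):ℝ) = ((i:ℕ):ℝ) - 1 := by
        push_cast [h1i]; ring
      have hin : ((i:ℕ) : ℝ) = (n : ℝ) - 1 := by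
        have h' : (i:ℕ) + 1 = n := h1
        have := congrArg (Nat.cast : ℕ → ℝ) h'
        push_cast at this; linarith
      have hplus : (2 * (((i:ℕ):ℝ) + 1) + 1) * a = (2 * (n:ℝ) + 1) * a := by rw [hin]; ring
      have hmid : (2 * ((i:ℕ):ℝ) + 1) * a = (2 * (n:ℝ) - 1) * a := by rw [hin]; ring
      rw [hplus, hmid, hcos_end] at id1
      push_cast [hcastm]
      rw [show (2 * (((i:ℕ):ℝ) - 1) + 1) * a = (2 * ((i:ℕ):ℝ) - 1) * a by ring]
      push_cast at hmid
      rw [hmid]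
      nlinarith [id1]
  · rw [if_neg h1, dif_pos (by omega)]
    have hcastp : ((((i:ℕ) + 1 : ℕ)):ℝ) = ((i:ℕ):ℝ) + 1 := by push_cast; ring
    by_cases h0 : (i : ℕ) = 0
    · rw [if_pos h0, dif_neg (by omega)]
      have h0R : ((i:ℕ):ℝ) = 0 := by rw [h0]; norm_num
      rw [show ((2 * ((i:ℕ):ℝ) - 1) * a) = -((2 * ((i:ℕ):ℝ) + 1) * a) by rw [h0R]; ring,
        Real.cos_neg] at id1
      push_cast
      nlinarith [id1]
    · rw [if_neg h0, dif_pos (by omega)]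
      have h1i : 1 ≤ (i : ℕ) := by omega
      have hcastm : ((((i:ℕ) - 1 : ℕ)):ℝ) = ((i:ℕ):ℝ) - 1 := by push_cast [h1i]; ring
      push_cast [hcastm]
      rw [show (2 * (((i:ℕ):ℝ) - 1) + 1) * a = (2 * ((i:ℕ):ℝ) - 1) * a by ring]
      nlinarith [id1]

lemma pvec_zero_iff (n j : ℕ) (hn : 0 < n) (r : Fin n) :
    pvec n j r = 0 ↔ ∃ u : ℕ, Odd u ∧ (2 * (r : ℕ) + 1) * j = u * n := by
  have hnR : (n : ℝ) ≠ 0 := Nat.cast_ne_zero.mpr (by omega)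
  rw [pvec, Real.cos_eq_zero_iff]
  constructor
  · rintro ⟨k, hk⟩
    have hR : ((2 * (r:ℕ) + 1) * j : ℝ) = (2 * (k:ℝ) + 1) * n := by
      field_simp at hk
      nlinarith [Real.pi_ne_zero, Real.pi_pos, hk]
    have hZ : ((2 * (r:ℕ) + 1) * j : ℤ) = (2 * k + 1) * n := by exact_mod_cast hR
    have hk0 : 0 ≤ k := by
      by_contra hneg
      push_neg at hneg
      have h2 : (2 * k + 1) < 0 := by omega
      have h3 : ((2 * k + 1) * n : ℤ) < 0 :=
        mul_neg_of_neg_of_pos h2 (by exact_mod_cast hn)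
      have h4 : (0 : ℤ) ≤ (2 * (r:ℕ) + 1) * j := by positivity
      omega
    refine ⟨(2 * k + 1).toNat, ⟨k.toNat, by omega⟩, ?_⟩
    have hcast : ((2 * k + 1).toNat : ℤ) = 2 * k + 1 := by omega
    have : ((2 * (r:ℕ) + 1) * j : ℤ) = ((2 * k + 1).toNat : ℤ) * n := by rw [hcast]; exact hZ
    exact_mod_cast this
  · rintro ⟨u, ⟨t, ht⟩, hu⟩
    refine ⟨t, ?_⟩
    have hR : ((2 * (r:ℕ) + 1) * j : ℝ) = (2 * (t:ℝ) + 1) * n := by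
      have := congrArg (Nat.cast : ℕ → ℝ) hu
      push_cast at this
      rw [this, ht]; push_cast; ring
    field_simp
    push_cast
    nlinarith [hR, Real.pi_pos]

lemma eig_step (n : ℕ) (lam : ℝ) (y : Fin n → ℝ)
    (heig : (pathLap n).mulVec y = lam • y) (i : Fin n) (h : (i : ℕ) + 1 < n) :
    y ⟨(i : ℕ) + 1, h⟩ = (deg n i - lam) * y i
      - (if h0 : 0 < (i : ℕ) then y ⟨(i : ℕ) - 1, by omega⟩ else 0) := by
  have := congrFun heig i
  rw [pathLap_row, dif_pos h] at this
  simp only [Pi.smul_apply, smul_eq_mul] at this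
  linarith [this]

lemma eig_zero_of_head (n : ℕ) (hn : 0 < n) (lam : ℝ) (y : Fin n → ℝ)
    (heig : (pathLap n).mulVec y = lam • y) (h0 : y ⟨0, hn⟩ = 0) : y = 0 := by
  have key : ∀ t : ℕ, ∀ ht : t < n, y ⟨t, ht⟩ = 0 := by
    intro t
    induction t using Nat.strong_induction_on with
    | _ t ih =>
      intro ht
      match t with
      | 0 => exact h0
      | Nat.succ s =>
        have hs : s < n := by omega
        have := eig_step n lam y heig ⟨s, hs⟩ (by simpa using ht)
        simp only [Fin.val_mk] at this
        rw [show (⟨s + 1, by omega⟩ : Fin n) = ⟨s + 1, ht⟩ from rfl] at this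
        rw [this, ih s (by omega) hs]
        by_cases hsz : 0 < s
        · rw [dif_pos hsz, ih (s-1) (by omega) (by omega)]; ring
        · rw [dif_neg hsz]; ring
  funext v
  have := key v v.isLt
  simpa using this

lemma pvec_head_pos (n j : ℕ) (hn : 0 < n) (hj : j < n) : 0 < pvec n j ⟨0, hn⟩ := by
  have hnR : (0:ℝ) < n := by exact_mod_cast hn
  apply Real.cos_pos_of_mem_Ioo
  constructor
  · have : (0:ℝ) ≤ (2 * ((0:ℕ):ℝ) + 1) * (j * Real.pi / (2 * n)) := by
      positivity
    simp only [Fin.val_mk] at *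
    nlinarith [Real.pi_pos]
  · simp only [Fin.val_mk]
    push_cast
    rw [show (2 * (0:ℝ) + 1) * ((j:ℝ) * Real.pi / (2 * n)) = (j:ℝ) * Real.pi / (2 * n) by ring]
    rw [div_lt_iff₀ (by positivity)]
    have hjR : (j:ℝ) < n := by exact_mod_cast hj
    nlinarith [Real.pi_pos]

lemma plam_strictMono (n : ℕ) (hn : 0 < n) : ∀ j j' : ℕ, j < j' → j' < n →
    plam n j < plam n j' := by
  intro j j' hjj hj'
  have hnR : (0:ℝ) < n := by exact_mod_cast hn
  have h1 : Real.cos (2 * ((j':ℝ) * Real.pi / (2 * n))) < Real.cos (2 * ((j:ℝ) * Real.pi / (2 * n))) := by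
    apply Real.cos_lt_cos_of_nonneg_of_le_pi
    · positivity
    · rw [show 2 * ((j':ℝ) * Real.pi / (2 * n)) = (j':ℝ) * Real.pi / n by ring]
      rw [div_le_iff₀ (by positivity)]
      have : (j':ℝ) ≤ n := by exact_mod_cast hj'.le
      nlinarith [Real.pi_pos]
    · have hcast : (j:ℝ) < j' := by exact_mod_cast hjj
      have hp := Real.pi_pos
      have h2n : (0:ℝ) < 2 * n := by positivity
      apply mul_lt_mul_of_pos_left _ (by norm_num : (0:ℝ) < 2)
      exact div_lt_div_of_pos_right (by nlinarith) h2n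
  unfold plam
  linarith


lemma eig_complete (n : ℕ) (hn : 0 < n) (lam : ℝ) (y : Fin n → ℝ) (hy : y ≠ 0)
    (heig : (pathLap n).mulVec y = lam • y) :
    ∃ j : ℕ, j < n ∧ ∃ c : ℝ, c ≠ 0 ∧ y = c • pvec n j := by
  -- step 1: lam = plam n j for some j < n
  have hstep1 : ∃ j : ℕ, j < n ∧ lam = plam n j := by
    by_contra hno
    push_neg at hno
    set f : Module.End ℝ (Fin n → ℝ) := Matrix.toLin' (pathLap n) with hf
    set μ : Fin (n + 1) → ℝ := fun i => if h : (i : ℕ) < n then plam n i else lam with hμ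
    set v : Fin (n + 1) → (Fin n → ℝ) := fun i =>
      if h : (i : ℕ) < n then pvec n i else y with hv
    have hμinj : Function.Injective μ := by
      intro i i' he
      simp only [hμ] at he
      by_cases h1 : (i : ℕ) < n <;> by_cases h2 : (i' : ℕ) < n
      · rw [dif_pos h1, dif_pos h2] at he
        rcases lt_trichotomy (i : ℕ) (i' : ℕ) with h | h | h
        · exact absurd he (ne_of_lt (plam_strictMono n hn _ _ h h2))
        · exact Fin.ext h
        · exact absurd he.symm (ne_of_lt (plam_strictMono n hn _ _ h h1))
      · rw [dif_pos h1, dif_neg h2] at he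
        exact absurd he.symm (hno i h1)
      · rw [dif_neg h1, dif_pos h2] at he
        exact absurd he (hno i' h2)
      · have hi := i.isLt; have hi' := i'.isLt
        exact Fin.ext (by omega)
    have heigvec : ∀ i : Fin (n + 1), f.HasEigenvector (μ i) (v i) := by
      intro i
      rw [Module.End.hasEigenvector_iff, Module.End.mem_eigenspace_iff]
      by_cases h1 : (i : ℕ) < n
      · simp only [hμ, hv, dif_pos h1]
        constructor
        · rw [hf, Matrix.toLin'_apply, pvec_eig n i hn]
        · intro hz
          have := pvec_head_pos n i hn h1
          rw [hz] at this
          simp at this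
      · simp only [hμ, hv, dif_neg h1]
        exact ⟨by rw [hf, Matrix.toLin'_apply, heig], hy⟩
    have hli := Module.End.eigenvectors_linearIndependent' f μ hμinj v heigvec
    have hcard := hli.fintype_card_le_finrank
    rw [Module.finrank_pi] at hcard
    simp [Fintype.card_fin] at hcard
  obtain ⟨j, hjn, hlam⟩ := hstep1
  set c : ℝ := y ⟨0, hn⟩ / pvec n j ⟨0, hn⟩ with hc
  have hp0 := pvec_head_pos n j hn hjn
  have hz : y - c • pvec n j = 0 := by
    apply eig_zero_of_head n hn lam
    · rw [Matrix.mulVec_sub, heig, Matrix.mulVec_smul, pvec_eig n j hn, hlam]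
      rw [smul_sub, smul_comm]
    · simp only [Pi.sub_apply, Pi.smul_apply, smul_eq_mul, hc]
      field_simp
      ring
  have hyc : y = c • pvec n j := by
    have := sub_eq_zero.mp hz
    exact this
  refine ⟨j, hjn, c, ?_, hyc⟩
  intro hc0
  rw [hc0, zero_smul] at hyc
  exact hy hyc

lemma mem_NZ_iff (n j r : ℕ) (hn : 0 < n) :
    (∃ u : ℕ, Odd u ∧ (2 * r + 1) * j = u * n) ↔
      Odd (j / Nat.gcd n j) ∧ (n / Nat.gcd n j) ∣ (2 * r + 1) := by
  set d := Nat.gcd n j with hd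
  have hd0 : 0 < d := Nat.gcd_pos_of_pos_left j hn
  set p := n / d with hp
  set q := j / d with hq
  have hnd : n = d * p := (Nat.div_mul_cancel (Nat.gcd_dvd_left n j)).symm.trans (by ring)
  have hjd : j = d * q := (Nat.div_mul_cancel (Nat.gcd_dvd_right n j)).symm.trans (by ring)
  have hp0 : 0 < p := by
    rcases Nat.eq_zero_or_pos p with h | h
    · rw [h, mul_zero] at hnd; omega
    · exact h
  have hcop : Nat.Coprime p q := Nat.coprime_div_gcd_div_gcd hd0
  constructor
  · rintro ⟨u, hu, he⟩
    rw [hnd, hjd] at he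
    have he2 : (2 * r + 1) * q = u * p := by
      have : d * ((2 * r + 1) * q) = d * (u * p) := by ring_nf; ring_nf at he; linarith [he]
      exact Nat.eq_of_mul_eq_mul_left hd0 this
    have hpdvd : p ∣ 2 * r + 1 := by
      have : p ∣ (2 * r + 1) * q := ⟨u, by linarith [he2]⟩
      exact (Nat.Coprime.dvd_of_dvd_mul_right hcop this)
    obtain ⟨s, hs⟩ := hpdvd
    have hus : u = s * q := by
      have : p * (s * q) = p * u := by rw [← mul_assoc, ← hs]; linarith [he2]
      have := Nat.eq_of_mul_eq_mul_left hp0 this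
      omega
    have hq_odd : Odd q := by
      rcases Nat.even_or_odd q with hev | hod
      · rw [hus] at hu
        exact absurd (hev.mul_left s) (Nat.not_even_iff_odd.mpr hu)
      · exact hod
    exact ⟨hq_odd, ⟨s, hs⟩⟩
  · rintro ⟨hqodd, ⟨s, hs⟩⟩
    have hsodd : Odd s := by
      rcases Nat.even_or_odd s with hev | hod
      · have : Even (2 * r + 1) := hs ▸ hev.mul_left p
        simp [Nat.even_add_one, parity_simps] at this
      · exact hod
    refine ⟨s * q, hsodd.mul hqodd, ?_⟩
    rw [hnd, hjd, hs]
    ring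

def IsPathPCVS (n : ℕ) (S : Set (Fin n)) : Prop :=
  S.Nonempty ∧ ∃ (lam : ℝ) (y : Fin n → ℝ), y ≠ 0 ∧ (pathLap n).mulVec y = lam • y ∧
    (∀ v : Fin n, v ∉ S → y v = 0) ∧ ∀ v : Fin n, v ∈ S → y v ≠ 0

def IsPathMPCVS (n : ℕ) (S : Set (Fin n)) : Prop :=
  IsPathPCVS n S ∧ ∀ T : Set (Fin n), T ⊂ S → ¬ IsPathPCVS n T

def suppJ (n j : ℕ) : Set (Fin n) := {v | pvec n j v ≠ 0}

lemma pcvs_iff (n : ℕ) (hn : 0 < n) (S : Set (Fin n)) :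
    IsPathPCVS n S ↔ S.Nonempty ∧ ∃ j : ℕ, j < n ∧ S = suppJ n j := by
  constructor
  · rintro ⟨hne, lam, y, hy, heig, hz, hnz⟩
    refine ⟨hne, ?_⟩
    obtain ⟨j, hjn, c, hc, hyc⟩ := eig_complete n hn lam y hy heig
    refine ⟨j, hjn, ?_⟩
    ext v
    simp only [suppJ, Set.mem_setOf_eq]
    constructor
    · intro hv
      have := hnz v hv
      rw [hyc] at this
      simp only [Pi.smul_apply, smul_eq_mul] at this
      intro h0; rw [h0, mul_zero] at this; exact this rfl
    · intro hv
      by_contra hvS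
      have := hz v hvS
      rw [hyc] at this
      simp only [Pi.smul_apply, smul_eq_mul] at this
      exact hv (by rcases mul_eq_zero.mp this with h | h; exact absurd h hc; exact h)
  · rintro ⟨hne, j, hjn, rfl⟩
    refine ⟨hne, plam n j, pvec n j, ?_, pvec_eig n j hn, ?_, ?_⟩
    · obtain ⟨v, hv⟩ := hne
      intro h0
      exact hv (by rw [h0]; rfl)
    · intro v hv
      simpa [suppJ, Set.mem_setOf_eq, not_not] using hv
    · intro v hv
      exact hv

lemma suppJ_nonempty (n j : ℕ) (hn : 0 < n) (hj : j < n) : (suppJ n j).Nonempty :=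
  ⟨⟨0, hn⟩, ne_of_gt (pvec_head_pos n j hn hj)⟩

lemma mpcvs_iff (n : ℕ) (hn : 0 < n) (S : Set (Fin n)) :
    IsPathMPCVS n S ↔ (S.Nonempty ∧ ∃ j : ℕ, j < n ∧ S = suppJ n j) ∧
      ∀ j : ℕ, j < n → ¬ (suppJ n j ⊂ S) := by
  constructor
  · rintro ⟨hp, hmin⟩
    refine ⟨(pcvs_iff n hn S).mp hp, ?_⟩
    intro j hjn hss
    exact hmin (suppJ n j) hss
      ((pcvs_iff n hn _).mpr ⟨suppJ_nonempty n j hn hjn, j, hjn, rfl⟩)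
  · rintro ⟨hp, hmin⟩
    refine ⟨(pcvs_iff n hn S).mpr hp, ?_⟩
    intro T hT hpcvs
    obtain ⟨hTne, j, hjn, rfl⟩ := (pcvs_iff n hn T).mp hpcvs
    exact hmin j hjn hT

lemma pvec_zero_iff' (n j : ℕ) (hn : 0 < n) (v : Fin n) :
    pvec n j v = 0 ↔ Odd (j / Nat.gcd n j) ∧ (n / Nat.gcd n j) ∣ (2 * (v : ℕ) + 1) := by
  rw [pvec_zero_iff n j hn v, mem_NZ_iff n j (v : ℕ) hn]

lemma pvec_zero_iff_p (n p : ℕ) (hn : 0 < n) (hpn : p ∣ n) (hp1 : 1 < p) (v : Fin n) :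
    pvec n (n / p) v = 0 ↔ p ∣ (2 * (v : ℕ) + 1) := by
  have hp0 : 0 < p := by omega
  have hj : (n / p) ∣ n := Nat.div_dvd_of_dvd hpn
  have hj0 : 0 < n / p := Nat.div_pos (Nat.le_of_dvd hn hpn) hp0
  have hgcd : Nat.gcd n (n / p) = n / p := Nat.gcd_eq_right hj
  rw [pvec_zero_iff' n (n/p) hn v, hgcd, Nat.div_self hj0,
    Nat.div_div_self hpn (by omega)]
  simp [odd_one]

lemma dvd_eq_self_of_lt_two_mul {p x : ℕ} (hd : p ∣ x) (h1 : 0 < x) (h2 : x < 2 * p) :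
    x = p := by
  obtain ⟨c, rfl⟩ := hd
  have hc : c = 1 := by nlinarith
  rw [hc, mul_one]

lemma odd_of_dvd_odd {d x : ℕ} (hdvd : d ∣ x) (hodd : Odd x) : Odd d := by
  rcases Nat.even_or_odd d with hev | h
  · obtain ⟨c, rfl⟩ := hdvd
    exact absurd (hev.mul_right c) (Nat.not_even_iff_odd.mpr hodd)
  · exact h

lemma odd_dvd_of_dvd_two_mul {p x : ℕ} (hodd : Odd p) (h : p ∣ 2 * x) : p ∣ x := by
  have hcop : Nat.Coprime p 2 := by
    exact Nat.coprime_two_right.mpr hodd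
  exact hcop.dvd_of_dvd_mul_left h

/-- Equivalence characterization of the MPCVSs of the path `P_n`: a vertex subset `S`
whose complement `S̄ = {v_{i_1}, …, v_{i_k}}` (`k ≥ 1`, `1 ≤ i_1`, `i_k ≤ n`) is isolated
is a minimal perfect critical vertex set iff, with `m = i_1 - 1`,
(i) `n - i_k = i_1 - 1` and `i_2 - i_1 = ⋯ = i_k - i_{k-1}`;
(ii) `k = 1` or `i_2 - i_1 - 1 = 2m`; and
(iii) `2m + 1` is an odd prime. -/
theorem path_isMPCVS_iff
    (n k : ℕ) (idx : ℕ → ℕ) (hk : 1 ≤ k)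
    (hge : 1 ≤ idx 1) (hle : idx k ≤ n)
    (hiso : ∀ j, 1 ≤ j → j < k → idx j + 2 ≤ idx (j + 1))
    (S : Set (Fin n))
    (hS : ∀ v : Fin n, v ∈ S ↔ ¬ ∃ j, 1 ≤ j ∧ j ≤ k ∧ idx j = (v : ℕ) + 1) :
    IsPathMPCVS n S ↔
      ((n - idx k = idx 1 - 1 ∧
        ∀ j j', 1 ≤ j → j < k → 1 ≤ j' → j' < k →
          idx (j + 1) - idx j = idx (j' + 1) - idx j') ∧
       (k = 1 ∨ idx 2 - idx 1 - 1 = 2 * (idx 1 - 1)) ∧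
       (Nat.Prime (2 * (idx 1 - 1) + 1) ∧ Odd (2 * (idx 1 - 1) + 1))) := by
  -- Monotonicity facts about idx on [1, k]
  have hmono : ∀ t s, 1 ≤ t → t ≤ s → s ≤ k → idx t + 2 * (s - t) ≤ idx s := by
    intro t s ht hts hsk
    induction s, hts using Nat.le_induction with
    | base => simp
    | succ s hts ih =>
      have h1 : idx s + 2 ≤ idx (s + 1) := hiso s (by omega) (by omega)
      have h2 := ih (by omega)
      omega
  have hlt_of_idxlt : ∀ t s, 1 ≤ t → t ≤ k → 1 ≤ s → s ≤ k → idx t < idx s → t < s := by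
    intro t s ht htk hs hsk hlt
    by_contra hc
    push_neg at hc
    have := hmono s t hs hc htk
    omega
  have hn : 0 < n := by
    have := hmono 1 k (le_refl 1) hk le_rfl
    omega
  have hcompl : ∀ v : Fin n, v ∉ S ↔ ∃ t, 1 ≤ t ∧ t ≤ k ∧ idx t = (v : ℕ) + 1 := by
    intro v
    rw [hS v, not_not]
  have hidx_le : ∀ t, 1 ≤ t → t ≤ k → idx t ≤ n := by
    intro t ht htk
    have := hmono t k ht htk le_rfl
    omega
  have hidx_ge : ∀ t, 1 ≤ t → t ≤ k → 1 ≤ idx t := by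
    intro t ht htk
    have := hmono 1 t le_rfl ht htk
    omega
  rw [mpcvs_iff n hn S]
  constructor
  · -- forward direction
    rintro ⟨⟨hne, j, hjn, hSsupp⟩, hmin⟩
    -- idx 1 - 1 belongs to the complement of S
    have hv1n : idx 1 - 1 < n := by have := hidx_le 1 le_rfl hk; omega
    have hv1 : (⟨idx 1 - 1, hv1n⟩ : Fin n) ∉ S := by
      rw [hcompl]
      exact ⟨1, le_rfl, hk, by simp; omega⟩
    -- hence pvec n j vanishes there, giving the arithmetic structure
    have hzero_iff : ∀ v : Fin n, v ∉ S ↔ pvec n j v = 0 := by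
      intro v
      rw [hSsupp]
      simp [suppJ, not_not]
    set p0 := n / Nat.gcd n j with hp0def
    have hOddq : Odd (j / Nat.gcd n j) ∧ p0 ∣ 2 * (idx 1 - 1) + 1 := by
      have := (hzero_iff _).mp hv1
      rw [pvec_zero_iff' n j hn] at this
      exact this
    have hW : ∀ v : Fin n, v ∉ S ↔ p0 ∣ 2 * (v : ℕ) + 1 := by
      intro v
      rw [hzero_iff, pvec_zero_iff' n j hn]
      exact ⟨fun h => h.2, fun h => ⟨hOddq.1, h⟩⟩
    have hj1 : 1 ≤ j := by
      by_contra hc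
      have hj0 : j = 0 := by omega
      have := hOddq.1
      rw [hj0] at this
      simp at this
    have hp0n : p0 ∣ n := Nat.div_dvd_of_dvd (Nat.gcd_dvd_left n j)
    have hp0pos : 0 < p0 := Nat.div_pos (Nat.le_of_dvd hn (Nat.gcd_dvd_left n j))
      (Nat.gcd_pos_of_pos_left j hn)
    have hp0gt1 : 1 < p0 := by
      rcases Nat.lt_or_ge 1 p0 with h | h
      · exact h
      · exfalso
        have hp01 : p0 = 1 := by omega
        have h2 : p0 * Nat.gcd n j = n := by
          rw [hp0def]; exact Nat.div_mul_cancel (Nat.gcd_dvd_left n j)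
        rw [hp01, one_mul] at h2
        have h3 : n ∣ j := h2 ▸ Nat.gcd_dvd_right n j
        have := Nat.le_of_dvd (by omega) h3
        omega
    have hp0odd : Odd p0 := odd_of_dvd_odd hOddq.2 ⟨idx 1 - 1, by ring⟩
    have hp0len : p0 ≤ n := Nat.le_of_dvd hn hp0n
    clear_value p0
    -- C1 : p0 = 2*(idx 1 - 1) + 1
    have hC1 : p0 = 2 * (idx 1 - 1) + 1 := by
      have hle1 : p0 ≤ 2 * (idx 1 - 1) + 1 := Nat.le_of_dvd (by omega) hOddq.2
      obtain ⟨c, hc⟩ := hp0odd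
      have hcn : c < n := by omega
      have hv0 : (⟨c, hcn⟩ : Fin n) ∉ S := by
        rw [hW]
        simp only [Fin.val_mk]
        exact ⟨1, by omega⟩
      obtain ⟨t, ht1, htk, ht⟩ := (hcompl _).mp hv0
      simp only [Fin.val_mk] at ht
      have := hmono 1 t le_rfl ht1 htk
      omega
    -- dvd at every idx t
    have hdvdt : ∀ t, 1 ≤ t → t ≤ k → p0 ∣ 2 * (idx t - 1) + 1 := by
      intro t ht htk
      have hlt : idx t - 1 < n := by have := hidx_le t ht htk; have := hidx_ge t ht htk; omega
      have : (⟨idx t - 1, hlt⟩ : Fin n) ∉ S := by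
        rw [hcompl]
        exact ⟨t, ht, htk, by simp; have := hidx_ge t ht htk; omega⟩
      have := (hW _).mp this
      simpa using this
    -- C2 : consecutive gaps are all p0
    have hC2 : ∀ t, 1 ≤ t → t < k → idx (t + 1) = idx t + p0 := by
      intro t ht htk
      have hd1 := hdvdt t ht (by omega)
      have hd2 := hdvdt (t + 1) (by omega) htk
      have hge2 : idx t + 2 ≤ idx (t + 1) := hiso t ht htk
      have hge1 : 1 ≤ idx t := hidx_ge t ht (by omega)
      have hdiff : p0 ∣ 2 * (idx (t + 1) - idx t) := by
        have h' : 2 * (idx (t + 1) - 1) + 1 - (2 * (idx t - 1) + 1)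
            = 2 * (idx (t + 1) - idx t) := by omega
        rw [← h']
        exact Nat.dvd_sub hd2 hd1
      have hdvdgap : p0 ∣ (idx (t + 1) - idx t) := odd_dvd_of_dvd_two_mul hp0odd hdiff
      have hgep : idx t + p0 ≤ idx (t + 1) := by
        have := Nat.le_of_dvd (by omega) hdvdgap
        omega
      have hwn : idx t - 1 + p0 < n := by
        have := hidx_le (t + 1) (by omega) htk
        omega
      have hwdvd : p0 ∣ 2 * (idx t - 1 + p0) + 1 := by
        obtain ⟨c, hc⟩ := hd1
        refine ⟨c + 2, ?_⟩
        calc 2 * (idx t - 1 + p0) + 1 = (2 * (idx t - 1) + 1) + p0 * 2 := by ring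
          _ = p0 * c + p0 * 2 := by rw [hc]
          _ = p0 * (c + 2) := by ring
      have hw : (⟨idx t - 1 + p0, hwn⟩ : Fin n) ∉ S := by
        rw [hW]
        simpa using hwdvd
      obtain ⟨s, hs1, hsk, hs⟩ := (hcompl _).mp hw
      simp only [Fin.val_mk] at hs
      have hsv : idx s = idx t + p0 := by omega
      have hts : t < s := hlt_of_idxlt t s ht (by omega) hs1 hsk (by omega)
      have := hmono (t + 1) s (by omega) (by omega) hsk
      omega
    -- C3 : n - idx k = idx 1 - 1
    have hC3 : n - idx k = idx 1 - 1 := by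
      have hd1 := hdvdt k hk le_rfl
      have hgk1 : 1 ≤ idx k := hidx_ge k hk le_rfl
      have hlt : n - idx k < p0 := by
        by_contra hc
        push_neg at hc
        have hwn : idx k - 1 + p0 < n := by omega
        have hwdvd : p0 ∣ 2 * (idx k - 1 + p0) + 1 := by
          obtain ⟨c, hc'⟩ := hd1
          refine ⟨c + 2, ?_⟩
          calc 2 * (idx k - 1 + p0) + 1 = (2 * (idx k - 1) + 1) + p0 * 2 := by ring
            _ = p0 * c + p0 * 2 := by rw [hc']
            _ = p0 * (c + 2) := by ring
        have hw : (⟨idx k - 1 + p0, hwn⟩ : Fin n) ∉ S := by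
          rw [hW]
          simpa using hwdvd
        obtain ⟨s, hs1, hsk, hs⟩ := (hcompl _).mp hw
        simp only [Fin.val_mk] at hs
        have := hlt_of_idxlt k s hk le_rfl hs1 hsk (by omega)
        omega
      have hdvd2 : p0 ∣ 2 * (n - idx k) + 1 := by
        have h2n : p0 ∣ 2 * n := Dvd.dvd.mul_left hp0n 2
        have heq : 2 * (n - idx k) + 1 = 2 * n - (2 * (idx k - 1) + 1) := by omega
        rw [heq]
        exact Nat.dvd_sub h2n hd1
      have := dvd_eq_self_of_lt_two_mul hdvd2 (by omega) (by omega)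
      omega
    refine ⟨⟨hC3, ?_⟩, ?_, ?_, ⟨idx 1 - 1, by ring⟩⟩
    · intro t t' ht htk ht' ht'k
      rw [hC2 t ht htk, hC2 t' ht' ht'k]
      omega
    · rcases Nat.eq_or_lt_of_le hk with h1 | h2
      · exact Or.inl h1.symm
      · right
        have := hC2 1 le_rfl h2
        have h21 : idx (1 + 1) = idx 2 := by norm_num
        omega
    · -- primality from minimality
      rw [← hC1, Nat.prime_def_lt]
      refine ⟨by omega, ?_⟩
      intro d hdlt hdvd
      by_contra hd1
      have hd0 : 0 < d := Nat.pos_of_dvd_of_pos hdvd (by omega)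
      have hdgt1 : 1 < d := by omega
      have hddvdn : d ∣ n := hdvd.trans hp0n
      have hdodd : Odd d := odd_of_dvd_odd hdvd hp0odd
      have hj2n : n / d < n := Nat.div_lt_self hn hdgt1
      have hziff := pvec_zero_iff_p n d hn hddvdn hdgt1
      have hsub : suppJ n (n / d) ⊆ S := by
        intro v hv
        by_contra hvS
        have h1 := (hW v).mp hvS
        have h2 : d ∣ 2 * (v : ℕ) + 1 := hdvd.trans h1
        exact hv ((hziff v).mpr h2)
      obtain ⟨c, hc⟩ := hdodd
      have hcn : c < n := by
        have := Nat.le_of_dvd hn hddvdn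
        omega
      have hv0S : (⟨c, hcn⟩ : Fin n) ∈ S := by
        by_contra h
        have h1 := (hW _).mp h
        simp only [Fin.val_mk] at h1
        have h2 : p0 ∣ d := by
          have : 2 * c + 1 = d := by omega
          rwa [this] at h1
        have := Nat.le_of_dvd (by omega) h2
        omega
      have hv0n : (⟨c, hcn⟩ : Fin n) ∉ suppJ n (n / d) := by
        simp only [suppJ, Set.mem_setOf_eq, not_not]
        apply (hziff _).mpr
        simp only [Fin.val_mk]
        exact ⟨1, by omega⟩
      refine hmin (n / d) hj2n ?_
      rw [Set.ssubset_def]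
      exact ⟨hsub, fun h => hv0n (h hv0S)⟩
  · -- backward direction
    rintro ⟨⟨hEnd, hgaps⟩, hii, hprime, _hodd⟩
    set m := idx 1 - 1 with hmdef
    set p := 2 * m + 1 with hpdef
    have hp1 : 1 < p := hprime.one_lt
    have hpm : p = 2 * m + 1 := hpdef
    have hmm : m = idx 1 - 1 := hmdef
    clear_value p m
    have hm1 : 1 ≤ m := by omega
    have hidx1 : idx 1 = m + 1 := by omega
    have hstep : ∀ t, 1 ≤ t → t < k → idx (t + 1) = idx t + p := by
      intro t ht htk
      have hk2 : 2 ≤ k := by omega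
      have hgap2 : idx 2 - idx 1 - 1 = 2 * m := by
        rcases hii with h1 | h2
        · omega
        · exact h2
      have h12 : idx 1 + 2 ≤ idx 2 := hiso 1 le_rfl (by omega)
      have hgap : idx 2 = idx 1 + p := by omega
      have := hgaps t 1 ht htk le_rfl (by omega)
      have h21 : idx (1 + 1) = idx 2 := by norm_num
      have h2 := hiso t ht htk
      omega
    have hidxt : ∀ t, 1 ≤ t → t ≤ k → idx t = m + 1 + (t - 1) * p := by
      intro t ht htk
      induction t with
      | zero => omega
      | succ s ih =>
        rcases Nat.eq_or_lt_of_le ht with h1 | h2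
        · have hs0 : s = 0 := by omega
          subst hs0
          simp [hidx1]
        · have hs1 : 1 ≤ s := by omega
          have := ih hs1 (by omega)
          rw [hstep s hs1 (by omega), this]
          have hsp : (s + 1 - 1) * p = (s - 1) * p + p := by
            have h' : s + 1 - 1 = (s - 1) + 1 := by omega
            rw [h', Nat.succ_mul]
          rw [hsp]
          ring
    have hidxk : idx k = m + 1 + (k - 1) * p := hidxt k hk le_rfl
    have hnval : n = idx k + m := by omega
    have hpn : p ∣ n := by
      obtain ⟨k', rfl⟩ : ∃ k', k = k' + 1 := ⟨k - 1, by omega⟩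
      refine ⟨k' + 1, ?_⟩
      have hsimp : (k' + 1 - 1) * p = k' * p := by simp
      rw [hidxk, hsimp] at hnval
      rw [hnval]
      have he : p * (k' + 1) = k' * p + p := by ring
      rw [he]
      have he2 : m + 1 + k' * p + m = k' * p + p := by
        have : m + 1 + m = p := by omega
        omega
      exact he2
    have hnkp : n = k * p := by
      obtain ⟨c, hc⟩ := hpn
      have : c = k := by
        obtain ⟨k', rfl⟩ : ∃ k', k = k' + 1 := ⟨k - 1, by omega⟩
        have hsimp : (k' + 1 - 1) * p = k' * p := by simp
        rw [hidxk, hsimp] at hnval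
        have he : p * c = c * p := by ring
        rw [he] at hc
        have he2 : (k' + 1) * p = k' * p + p := by ring
        have hm2 : m + 1 + m = p := by omega
        -- n = m+1+k'*p+m = k'*p + p = (k'+1)*p ; also n = c*p ; cancel p
        have hn1 : n = (k' + 1) * p := by rw [he2]; omega
        rw [hn1] at hc
        exact (Nat.eq_of_mul_eq_mul_right (by omega) hc.symm)
      rw [this] at hc
      rw [hc]; ring
    have hSc : ∀ v : Fin n, v ∉ S ↔ p ∣ 2 * (v : ℕ) + 1 := by
      intro v
      rw [hcompl]
      constructor
      · rintro ⟨t, ht1, htk, hidxv⟩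
        obtain ⟨t', rfl⟩ : ∃ t', t = t' + 1 := ⟨t - 1, by omega⟩
        have hval := hidxt (t' + 1) ht1 htk
        have hsimp : (t' + 1 - 1) * p = t' * p := by simp
        rw [hsimp] at hval
        have h' : (v : ℕ) + 1 = (m + t' * p) + 1 := by
          rw [← hidxv, hval]; ring
        have hv : (v : ℕ) = m + t' * p := by
          exact Nat.add_right_cancel h'
        exact ⟨2 * t' + 1, by rw [hv, hpdef]; ring⟩
      · rintro ⟨s, hs⟩
        have hsodd : Odd s := by
          have : Odd (p * s) := by rw [← hs]; exact ⟨(v : ℕ), by ring⟩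
          rcases Nat.even_or_odd s with hev | hod
          · exact absurd (hev.mul_left p) (Nat.not_even_iff_odd.mpr this)
          · exact hod
        obtain ⟨t, rfl⟩ := hsodd
        have hvn : (v : ℕ) < n := v.isLt
        have htk : t < k := by
          by_contra hc
          push_neg at hc
          have h1 : p * (2 * k + 1) ≤ p * (2 * t + 1) := Nat.mul_le_mul_left p (by omega)
          have h2 : 2 * (v : ℕ) + 1 < 2 * (k * p) + 1 := by rw [← hnkp]; omega
          nlinarith
        have hv : (v : ℕ) = m + t * p := by
          have h1 : 2 * (v : ℕ) + 1 = 2 * (m + t * p) + 1 := by rw [hs, hpdef]; ring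
          have h2 : 2 * (v : ℕ) = 2 * (m + t * p) := Nat.add_right_cancel h1
          exact Nat.eq_of_mul_eq_mul_left (by omega) h2
        refine ⟨t + 1, by omega, by omega, ?_⟩
        have hval := hidxt (t + 1) (by omega) (by omega)
        have hsimp : (t + 1 - 1) * p = t * p := by simp
        rw [hsimp] at hval
        rw [hval, hv]
        ring
    have hziff := pvec_zero_iff_p n p hn hpn hp1
    have hsupp : S = suppJ n (n / p) := by
      ext v
      have h1 : v ∉ S ↔ pvec n (n / p) v = 0 := (hSc v).trans (hziff v).symm
      simp only [suppJ, Set.mem_setOf_eq]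
      constructor
      · intro hv h0
        exact (h1.mpr h0) hv
      · intro hv
        by_contra hvS
        exact hv (h1.mp hvS)
    have h0S : (⟨0, hn⟩ : Fin n) ∈ S := by
      rw [hS]
      rintro ⟨t, ht1, htk, he⟩
      have := hmono 1 t le_rfl ht1 htk
      simp only [Fin.val_mk] at he
      omega
    refine ⟨⟨⟨⟨0, hn⟩, h0S⟩, n / p, Nat.div_lt_self hn hp1, hsupp⟩, ?_⟩
    intro j' hj'n hss
    rw [Set.ssubset_def] at hss
    obtain ⟨hsub, hnsub⟩ := hss
    obtain ⟨v, hvS, hvnsupp⟩ := Set.not_subset.mp hnsub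
    have hv0 : pvec n j' v = 0 := by
      by_contra h
      exact hvnsupp h
    rw [pvec_zero_iff' n j' hn] at hv0
    obtain ⟨hOdd', hdvd'⟩ := hv0
    set p' := n / Nat.gcd n j' with hp'def
    have hj'1 : 1 ≤ j' := by
      by_contra hc
      have : j' = 0 := by omega
      rw [this] at hOdd'
      simp at hOdd'
    have hp'n : p' ∣ n := Nat.div_dvd_of_dvd (Nat.gcd_dvd_left n j')
    have hp'pos : 0 < p' := Nat.div_pos (Nat.le_of_dvd hn (Nat.gcd_dvd_left n j'))
      (Nat.gcd_pos_of_pos_left j' hn)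
    have hp'odd : Odd p' := odd_of_dvd_odd hdvd' ⟨(v : ℕ), by ring⟩
    -- every vertex outside S is a zero of pvec n j'
    have hout : ∀ w : Fin n, w ∉ S → p' ∣ 2 * (w : ℕ) + 1 := by
      intro w hw
      have hwz : pvec n j' w = 0 := by
        by_contra h
        exact hw (hsub h)
      rw [pvec_zero_iff' n j' hn] at hwz
      exact hwz.2
    -- the vertex m is outside S, hence p' ∣ 2m+1 = p, so p' = p by primality
    have hmn : m < n := by omega
    have hvm : (⟨m, hmn⟩ : Fin n) ∉ S := by
      rw [hcompl]
      exact ⟨1, le_rfl, hk, by simp [hidx1]⟩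
    have hp'p : p' ∣ p := by
      have := hout _ hvm
      simpa [hpdef] using this
    have hmul' : p' * Nat.gcd n j' = n := by
      rw [hp'def]; exact Nat.div_mul_cancel (Nat.gcd_dvd_left n j')
    have hgcdle : Nat.gcd n j' ≤ j' := Nat.le_of_dvd (by omega) (Nat.gcd_dvd_right n j')
    have hp'eq : p' = p := by
      rcases (Nat.Prime.eq_one_or_self_of_dvd hprime p' hp'p) with h | h
      · exfalso
        rw [h, one_mul] at hmul'
        omega
      · exact h
    -- then suppJ n j' = S, contradicting strictness
    have hSsubJ : S ⊆ suppJ n j' := by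
      intro w hw
      simp only [suppJ, Set.mem_setOf_eq]
      intro h0
      rw [pvec_zero_iff' n j' hn] at h0
      have hpw : p ∣ 2 * (w : ℕ) + 1 := hp'eq ▸ h0.2
      exact ((hSc w).mpr hpw) hw
    exact hnsub hSsubJ
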